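/- Let u, v be real symmetric positive semidefinite r×r matrices, a ∈ GL(r,ℝ), and let f(x) = u + a (x⁻¹ + v)⁻¹ aᵀ, a map of the cone of real symmetric positive definite matrices into itself. Define δ(x,y) = (Σ_{k=1}^r (log λ_k(x,y))²)^{1/2}, where λ_1(x,y),…,λ_r(x,y) are the eigenvalues of y^{-1/2} x y^{-1/2}. Then: (1) δ(f(x), f(y)) ≤ δ(x,y) for all positive definite x, y; (2) if u is positive definite or v is positive definite, then δ(f(x), f(y)) < δ(x,y) whenever x ≠ y; (3) if both u and v are positive definite, then there exists κ with 0 < κ < 1 such that δ(f(x), f(y)) ≤ κ · δ(x,y) for all positive definite x, y. -/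

import Mathlib

open Matrix

open Classical in
/-- The inverse of the positive semidefinite square root of a matrix
(junk value `1` if the matrix is not positive semidefinite). -/
noncomputable def Matrix.invSqrt {r : ℕ} (y : Matrix (Fin r) (Fin r) ℝ) :
    Matrix (Fin r) (Fin r) ℝ :=
  if hy : y.PosSemidef then ((hy.1.eigenvectorUnitary : Matrix (Fin r) (Fin r) ℝ) *
    diagonal ((↑) ∘ (Real.sqrt ∘ hy.1.eigenvalues)) *
    (star hy.1.eigenvectorUnitary : Matrix (Fin r) (Fin r) ℝ))⁻¹ else 1

/-- `λ_k(x,y)`: the `k`-th eigenvalue of `y^{-1/2} * x * y^{-1/2}` in decreasing order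
(`λ_0 ≥ λ_1 ≥ …`); junk value `0` if the matrix is not symmetric. -/
noncomputable def Matrix.lambdaK {r : ℕ} (x y : Matrix (Fin r) (Fin r) ℝ) (k : Fin r) : ℝ :=
  if hC : (y.invSqrt * x * y.invSqrt).IsHermitian then
    (hC.eigenvalues ∘ Tuple.sort hC.eigenvalues) k.rev
  else 0

/-- The Riemannian distance on the cone of positive definite symmetric matrices:
`δ(x,y) = (Σ_k (log λ_k(x,y))²)^{1/2}` where the `λ_k(x,y)` are the eigenvalues of
`y^{-1/2} x y^{-1/2}`. -/
noncomputable def Matrix.riemannDist {r : ℕ} (x y : Matrix (Fin r) (Fin r) ℝ) : ℝ :=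
  Real.sqrt (∑ k : Fin r, (Real.log (x.lambdaK y k)) ^ 2)


namespace RD

variable {r : ℕ}

local notation "Mat" => Matrix (Fin r) (Fin r) ℝ

/-- helper: v ⬝ (U z) = (Uᵀ v) ⬝ z -/
lemma dot_mulVec_left (U : Mat) (v z : Fin r → ℝ) :
    v ⬝ᵥ (U *ᵥ z) = (Uᵀ *ᵥ v) ⬝ᵥ z := by
  rw [dotProduct_mulVec, mulVec_transpose]

lemma dot_diag (d c : Fin r → ℝ) :
    c ⬝ᵥ (diagonal d *ᵥ c) = ∑ i, d i * (c i) ^ 2 := by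
  simp only [dotProduct, mulVec_diagonal]
  exact Finset.sum_congr rfl fun i _ => by ring

/-- congruence of quadratic forms -/
lemma quad_congr (A B : Mat) (v : Fin r → ℝ) :
    (B *ᵥ v) ⬝ᵥ (A *ᵥ (B *ᵥ v)) = v ⬝ᵥ ((Bᵀ * A * B) *ᵥ v) := by
  conv_rhs => rw [mul_assoc, ← mulVec_mulVec, dot_mulVec_left, transpose_transpose,
    ← mulVec_mulVec]

lemma dot_self_eq_sum_sq (w : Fin r → ℝ) : w ⬝ᵥ w = ∑ i, (w i) ^ 2 := by
  simp only [dotProduct]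
  exact Finset.sum_congr rfl fun i _ => by ring

lemma sum_sq_pos {w : Fin r → ℝ} (hw : w ≠ 0) : 0 < ∑ i, (w i) ^ 2 := by
  rcases Function.ne_iff.mp hw with ⟨i, hi⟩
  exact Finset.sum_pos' (fun j _ => sq_nonneg _)
    ⟨i, Finset.mem_univ i, lt_of_le_of_ne (sq_nonneg _) (Ne.symm (pow_ne_zero 2 hi))⟩

lemma dot_self_pos {w : Fin r → ℝ} (hw : w ≠ 0) : 0 < w ⬝ᵥ w := by
  rw [dot_self_eq_sum_sq]; exact sum_sq_pos hw

/-- quadratic form from a spectral decomposition -/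
lemma quad_decomp {U : Mat} {d : Fin r → ℝ} {A : Mat}
    (hdec : A = U * diagonal d * Uᵀ) (w : Fin r → ℝ) :
    w ⬝ᵥ (A *ᵥ w) = ∑ i, d i * ((Uᵀ *ᵥ w) i) ^ 2 := by
  subst hdec
  rw [← mulVec_mulVec, ← mulVec_mulVec, dot_mulVec_left, ← dot_diag]

lemma dot_self_of_orth {U : Mat} (hUUt : U * Uᵀ = 1) (w : Fin r → ℝ) :
    (Uᵀ *ᵥ w) ⬝ᵥ (Uᵀ *ᵥ w) = w ⬝ᵥ w := by
  rw [dot_mulVec_left, transpose_transpose, mulVec_mulVec, hUUt, one_mulVec]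

lemma mulVec_ne_zero {A : Mat} (hA : IsUnit A) {w : Fin r → ℝ} (hw : w ≠ 0) :
    A *ᵥ w ≠ 0 := by
  intro h
  apply hw
  have hd : IsUnit A.det := (isUnit_iff_isUnit_det A).mp hA
  have := congrArg (fun z => A⁻¹ *ᵥ z) h
  simpa [mulVec_mulVec, nonsing_inv_mul A hd] using this

/-- positivity of the quadratic form of a PosDef real matrix -/
lemma posdef_quad_pos {A : Mat} (hA : A.PosDef) {w : Fin r → ℝ} (hw : w ≠ 0) :
    0 < w ⬝ᵥ (A *ᵥ w) := by
  have := hA.dotProduct_mulVec_pos hw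
  simpa using this

lemma possemidef_quad_nonneg {A : Mat} (hA : A.PosSemidef) (w : Fin r → ℝ) :
    0 ≤ w ⬝ᵥ (A *ᵥ w) := by
  have := hA.dotProduct_mulVec_nonneg w
  simpa using this

/-- congruence preserves positive definiteness -/
lemma posdef_conj {A : Mat} (hA : A.PosDef) {B : Mat} (hB : IsUnit B) :
    (Bᵀ * A * B).PosDef := by
  refine PosDef.of_dotProduct_mulVec_pos ?_ ?_
  · have h1 : (Bᵀ * A * B)ᴴ = (Bᵀ * A * B)ᵀ := conjTranspose_eq_transpose_of_trivial _
    have h2 : Aᵀ = A := by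
      have := hA.isHermitian
      rwa [IsHermitian, conjTranspose_eq_transpose_of_trivial] at this
    rw [IsHermitian, h1, transpose_mul, transpose_mul, transpose_transpose, h2, mul_assoc]
  · intro w hw
    have hBw : B *ᵥ w ≠ 0 := mulVec_ne_zero hB hw
    have := hA.dotProduct_mulVec_pos hBw
    simpa [← quad_congr A B w, mulVec_mulVec] using this


noncomputable def sq {y : Mat} (hy : y.PosDef) : Mat :=
  (hy.posSemidef.1.eigenvectorUnitary : Matrix (Fin r) (Fin r) ℝ) *
    diagonal ((↑) ∘ (Real.sqrt ∘ hy.posSemidef.1.eigenvalues)) *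
    (star hy.posSemidef.1.eigenvectorUnitary : Matrix (Fin r) (Fin r) ℝ)

open scoped MatrixOrder in
lemma sq_eq_cfc {y : Mat} (hy : y.PosDef) : sq hy = CFC.sqrt y := by
  rw [CFC.sqrt_eq_cfc, cfc_nnreal_eq_real _ y hy.posSemidef.nonneg, hy.posSemidef.1.cfc_eq,
    IsHermitian.cfc, Unitary.conjStarAlgAut_apply, sq]
  congr 2
  funext i j
  simp [diagonal_apply, max_eq_left, hy.posSemidef.eigenvalues_nonneg]

open scoped MatrixOrder in
lemma sq_mul_sq {y : Mat} (hy : y.PosDef) : sq hy * sq hy = y := by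
  rw [sq_eq_cfc]; exact CFC.sqrt_mul_sqrt_self y hy.posSemidef.nonneg

lemma isUnit_sq {y : Mat} (hy : y.PosDef) : IsUnit (sq hy) := by
  rw [isUnit_iff_isUnit_det]
  have h : (sq hy).det * (sq hy).det = y.det := by
    rw [← det_mul, sq_mul_sq]
  have hne : (sq hy).det ≠ 0 := by
    intro h0
    rw [h0, mul_zero] at h
    exact hy.det_pos.ne' h.symm
  exact hne.isUnit

open scoped MatrixOrder in
lemma sq_transpose {y : Mat} (hy : y.PosDef) : (sq hy)ᵀ = sq hy := by
  have h := (Matrix.nonneg_iff_posSemidef.mp (CFC.sqrt_nonneg y)).isHermitian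
  rw [← sq_eq_cfc hy] at h
  rwa [IsHermitian, conjTranspose_eq_transpose_of_trivial] at h

lemma invSqrt_eq {y : Mat} (hy : y.PosDef) : y.invSqrt = (sq hy)⁻¹ := by
  rw [Matrix.invSqrt, dif_pos hy.posSemidef]; rfl

lemma invSqrt_mul_sq {y : Mat} (hy : y.PosDef) : y.invSqrt * sq hy = 1 := by
  rw [invSqrt_eq hy, nonsing_inv_mul _ ((isUnit_iff_isUnit_det _).mp (isUnit_sq hy))]

lemma sq_mul_invSqrt {y : Mat} (hy : y.PosDef) : sq hy * y.invSqrt = 1 := by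
  rw [invSqrt_eq hy, mul_nonsing_inv _ ((isUnit_iff_isUnit_det _).mp (isUnit_sq hy))]

lemma isUnit_invSqrt {y : Mat} (hy : y.PosDef) : IsUnit y.invSqrt := by
  rw [invSqrt_eq hy]
  exact (Matrix.isUnit_nonsing_inv_iff).mpr (isUnit_sq hy)

lemma invSqrt_transpose {y : Mat} (hy : y.PosDef) : (y.invSqrt)ᵀ = y.invSqrt := by
  rw [invSqrt_eq hy, transpose_nonsing_inv, sq_transpose hy]

lemma invSqrt_mul_self_mul {y : Mat} (hy : y.PosDef) :
    y.invSqrt * y * y.invSqrt = 1 := by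
  calc y.invSqrt * y * y.invSqrt = y.invSqrt * (sq hy * sq hy) * y.invSqrt := by
        rw [sq_mul_sq hy]
    _ = (y.invSqrt * sq hy) * (sq hy * y.invSqrt) := by
        simp only [mul_assoc]
    _ = 1 := by rw [invSqrt_mul_sq hy, sq_mul_invSqrt hy, one_mul]

/-- reconstruction of `x` from `C(x,y)` -/
lemma sq_conj_C {x y : Mat} (hy : y.PosDef) :
    sq hy * (y.invSqrt * x * y.invSqrt) * sq hy = x := by
  rw [← mul_assoc, ← mul_assoc, sq_mul_invSqrt hy, one_mul, mul_assoc,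
    invSqrt_mul_sq hy, mul_one]

lemma posDef_C {x y : Mat} (hx : x.PosDef) (hy : y.PosDef) :
    (y.invSqrt * x * y.invSqrt).PosDef := by
  have h := posdef_conj hx (isUnit_invSqrt hy)
  rwa [invSqrt_transpose hy] at h

/-- invSqrt of the inverse is the square root -/
lemma invSqrt_inv {y : Mat} (hy : y.PosDef) : (y⁻¹).invSqrt = sq hy := by
  have hd : IsUnit (sq hy).det := (isUnit_iff_isUnit_det _).mp (isUnit_sq hy)
  have h1 : ((sq hy)⁻¹) ^ 2 = y⁻¹ := by
    rw [pow_two, ← Matrix.mul_inv_rev, sq_mul_sq hy]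
  have h2 : (sq hy)⁻¹ = sq hy.inv :=
    by rw [sq_eq_cfc, sq_eq_cfc]; exact hy.posSemidef.inv_sqrt
  rw [invSqrt_eq hy.inv, ← h2, nonsing_inv_nonsing_inv _ hd]


lemma orth_comm {U : Mat} (hUt : Uᵀ * U = 1) : U * Uᵀ = 1 :=
  mul_eq_one_comm.mp hUt

lemma orth_perm {U : Mat} (hUt : Uᵀ * U = 1) (ρ : Equiv.Perm (Fin r)) :
    (U.submatrix id ⇑ρ)ᵀ * U.submatrix id ⇑ρ = 1 := by
  rw [transpose_submatrix]
  have h := submatrix_mul_equiv Uᵀ U (⇑ρ) (Equiv.refl (Fin r)) (⇑ρ)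
  simp only [Equiv.coe_refl] at h
  rw [h, hUt]
  exact submatrix_one_equiv ρ

lemma decomp_perm (U : Mat) (d : Fin r → ℝ) (ρ : Equiv.Perm (Fin r)) :
    U.submatrix id ⇑ρ * diagonal (d ∘ ⇑ρ) * (U.submatrix id ⇑ρ)ᵀ
      = U * diagonal d * Uᵀ := by
  rw [transpose_submatrix, ← submatrix_diagonal_equiv d ρ]
  have h1 := submatrix_mul_equiv U (diagonal d) (id : Fin r → Fin r) ρ (⇑ρ)
  rw [h1]
  have h2 := submatrix_mul_equiv (U * diagonal d) Uᵀ (id : Fin r → Fin r) ρ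
    (id : Fin r → Fin r)
  rw [h2, submatrix_id_id]

/-- Spectral bridge: `C(x,y)` decomposes with eigenvalues exactly `lambdaK`. -/
lemma bridge {x y : Mat} (hx : x.PosDef) (hy : y.PosDef) :
    ∃ U : Mat, Uᵀ * U = 1 ∧ U * Uᵀ = 1 ∧
      y.invSqrt * x * y.invSqrt = U * diagonal (x.lambdaK y) * Uᵀ := by
  have hC : (y.invSqrt * x * y.invSqrt).PosDef := posDef_C hx hy
  have hH : (y.invSqrt * x * y.invSqrt).IsHermitian := hC.isHermitian
  set μ : Fin r → ℝ := hH.eigenvalues with hμ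
  set V : Mat := (hH.eigenvectorUnitary : Mat) with hV
  have hVt : Vᵀ * V = 1 := by
    have h := (Unitary.mem_iff.mp hH.eigenvectorUnitary.2).1
    rwa [star_eq_conjTranspose, conjTranspose_eq_transpose_of_trivial] at h
  have hspec : y.invSqrt * x * y.invSqrt = V * diagonal μ * Vᵀ := by
    have h := hH.spectral_theorem
    rw [Unitary.conjStarAlgAut_apply, star_eq_conjTranspose,
      conjTranspose_eq_transpose_of_trivial] at h
    have hof : RCLike.ofReal ∘ μ = μ := by funext i; simp
    rwa [hof] at h
  set ρ : Equiv.Perm (Fin r) := Fin.revPerm.trans (Tuple.sort μ) with hρ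
  have hlam : x.lambdaK y = μ ∘ ⇑ρ := by
    funext k
    rw [Matrix.lambdaK, dif_pos hH]
    simp [hρ, Equiv.trans_apply]
    rfl
  refine ⟨V.submatrix id ⇑ρ, orth_perm hVt ρ, orth_comm (orth_perm hVt ρ), ?_⟩
  rw [hlam, decomp_perm V μ ρ, hspec]

lemma lambdaK_pos {x y : Mat} (hx : x.PosDef) (hy : y.PosDef) (k : Fin r) :
    0 < x.lambdaK y k := by
  have hC : (y.invSqrt * x * y.invSqrt).PosDef := posDef_C hx hy
  have hH : (y.invSqrt * x * y.invSqrt).IsHermitian := hC.isHermitian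
  rw [Matrix.lambdaK, dif_pos hH]
  exact hC.eigenvalues_pos _

lemma lambdaK_antitone {x y : Mat} (hx : x.PosDef) (hy : y.PosDef) :
    Antitone (x.lambdaK y) := by
  have hC : (y.invSqrt * x * y.invSqrt).PosDef := posDef_C hx hy
  have hH : (y.invSqrt * x * y.invSqrt).IsHermitian := hC.isHermitian
  intro k l hkl
  rw [Matrix.lambdaK, dif_pos hH, Matrix.lambdaK, dif_pos hH]
  exact Tuple.monotone_sort hH.eigenvalues (Fin.rev_le_rev.mpr hkl)

lemma exists_mem_ker {J : Type} [Fintype J] (hJ : Fintype.card J < r)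
    (M : Matrix J (Fin r) ℝ) :
    ∃ v : Fin r → ℝ, v ≠ 0 ∧ M *ᵥ v = 0 := by
  have hker : LinearMap.ker M.mulVecLin ≠ ⊥ := by
    intro hbot
    have hinj : Function.Injective ⇑M.mulVecLin := LinearMap.ker_eq_bot.mp hbot
    have hle := LinearMap.finrank_le_finrank_of_injective hinj
    rw [Module.finrank_pi, Module.finrank_pi, Fintype.card_fin] at hle
    omega
  obtain ⟨v, hv, hv0⟩ := (Submodule.ne_bot_iff _).mp hker
  exact ⟨v, hv0, by simpa [Matrix.mulVecLin_apply] using hv⟩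

lemma sum_bound_lower {d c : Fin r → ℝ} {I : Finset (Fin r)} (hsup : ∀ i ∉ I, c i = 0)
    {α : ℝ} (hα : ∀ i ∈ I, α ≤ d i) :
    α * (∑ i, (c i) ^ 2) ≤ ∑ i, d i * (c i) ^ 2 := by
  rw [Finset.mul_sum]
  apply Finset.sum_le_sum
  intro i _
  by_cases hi : i ∈ I
  · exact mul_le_mul_of_nonneg_right (hα i hi) (sq_nonneg _)
  · rw [hsup i hi]; simp

lemma sum_bound_upper {d c : Fin r → ℝ} {I : Finset (Fin r)} (hsup : ∀ i ∉ I, c i = 0)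
    {α : ℝ} (hα : ∀ i ∈ I, d i ≤ α) :
    ∑ i, d i * (c i) ^ 2 ≤ α * (∑ i, (c i) ^ 2) := by
  rw [Finset.mul_sum]
  apply Finset.sum_le_sum
  intro i _
  by_cases hi : i ∈ I
  · exact mul_le_mul_of_nonneg_right (hα i hi) (sq_nonneg _)
  · rw [hsup i hi]; simp

/-- Core existence lemma: a common "test vector" for two spectral decompositions. -/
lemma core_exists {x y x' y' T : Mat}
    (hy : y.PosDef) (hy' : y'.PosDef) (hT : IsUnit T)
    {U U' : Mat} {d d' : Fin r → ℝ}
    (hUt : Uᵀ * U = 1)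
    (hdec : y.invSqrt * x * y.invSqrt = U * diagonal d * Uᵀ)
    (hU't : U'ᵀ * U' = 1)
    (hdec' : y'.invSqrt * x' * y'.invSqrt = U' * diagonal d' * U'ᵀ)
    (I I' : Finset (Fin r)) (hcard : r < I.card + I'.card) :
    ∃ w : Fin r → ℝ, w ≠ 0 ∧ T *ᵥ w ≠ 0 ∧
      (∀ α : ℝ, (∀ i ∈ I', α ≤ d' i) → α * (w ⬝ᵥ (y' *ᵥ w)) ≤ w ⬝ᵥ (x' *ᵥ w)) ∧
      (∀ α : ℝ, (∀ i ∈ I', d' i ≤ α) → w ⬝ᵥ (x' *ᵥ w) ≤ α * (w ⬝ᵥ (y' *ᵥ w))) ∧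
      (∀ α : ℝ, (∀ i ∈ I, α ≤ d i) →
        α * ((T *ᵥ w) ⬝ᵥ (y *ᵥ (T *ᵥ w))) ≤ (T *ᵥ w) ⬝ᵥ (x *ᵥ (T *ᵥ w))) ∧
      (∀ α : ℝ, (∀ i ∈ I, d i ≤ α) →
        (T *ᵥ w) ⬝ᵥ (x *ᵥ (T *ᵥ w)) ≤ α * ((T *ᵥ w) ⬝ᵥ (y *ᵥ (T *ᵥ w)))) := by
  classical
  set S : Mat := sq hy * T * y'.invSqrt with hS
  -- the constraint matrix
  set B : Matrix (↥(I'ᶜ) ⊕ ↥(Iᶜ)) (Fin r) ℝ :=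
    Matrix.of (Sum.elim (fun i l => U' l i.1) (fun i l => (Uᵀ * S) i.1 l)) with hB
  have hcardJ : Fintype.card (↥(I'ᶜ) ⊕ ↥(Iᶜ)) < r := by
    rw [Fintype.card_sum, Fintype.card_coe, Fintype.card_coe,
      Finset.card_compl, Finset.card_compl, Fintype.card_fin]
    have h1 : I.card ≤ r := by
      simpa [Fintype.card_fin] using Finset.card_le_univ I
    have h2 : I'.card ≤ r := by
      simpa [Fintype.card_fin] using Finset.card_le_univ I'
    omega
  obtain ⟨v, hv0, hvker⟩ := exists_mem_ker hcardJ B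
  -- the two support conditions
  have hsup' : ∀ i, i ∉ I' → (U'ᵀ *ᵥ v) i = 0 := by
    intro i hi
    have := congrFun hvker (Sum.inl ⟨i, Finset.mem_compl.mpr hi⟩)
    simpa [hB, Matrix.mulVec, dotProduct, Matrix.transpose_apply] using this
  have hsup : ∀ i, i ∉ I → ((Uᵀ * S) *ᵥ v) i = 0 := by
    intro i hi
    have := congrFun hvker (Sum.inr ⟨i, Finset.mem_compl.mpr hi⟩)
    simpa [hB, Matrix.mulVec, dotProduct] using this
  set w : Fin r → ℝ := y'.invSqrt *ᵥ v with hw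
  have hvw : sq hy' *ᵥ w = v := by
    rw [hw, mulVec_mulVec, sq_mul_invSqrt hy', one_mulVec]
  have hwne : w ≠ 0 := by
    intro h0
    apply hv0
    rw [← hvw, h0, mulVec_zero]
  have hTwne : T *ᵥ w ≠ 0 := mulVec_ne_zero hT hwne
  have hTw : T *ᵥ w = y.invSqrt *ᵥ (S *ᵥ v) := by
    rw [hS, hw, mulVec_mulVec, mulVec_mulVec]
    congr 1
    rw [← mul_assoc, ← mul_assoc, invSqrt_mul_sq hy, one_mul]
  -- quadratic forms, primed side
  have hq1 : w ⬝ᵥ (x' *ᵥ w) = ∑ i, d' i * ((U'ᵀ *ᵥ v) i) ^ 2 := by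
    rw [hw, quad_congr, invSqrt_transpose hy', quad_decomp hdec' v]
  have hq2 : w ⬝ᵥ (y' *ᵥ w) = ∑ i, ((U'ᵀ *ᵥ v) i) ^ 2 := by
    rw [hw, quad_congr, invSqrt_transpose hy', invSqrt_mul_self_mul hy', one_mulVec,
      ← dot_self_of_orth (orth_comm hU't) v, dot_self_eq_sum_sq]
  -- quadratic forms, unprimed side
  have hq3 : (T *ᵥ w) ⬝ᵥ (x *ᵥ (T *ᵥ w)) = ∑ i, d i * (((Uᵀ * S) *ᵥ v) i) ^ 2 := by
    rw [hTw, quad_congr, invSqrt_transpose hy, quad_decomp hdec (S *ᵥ v)]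
    simp only [hS, mulVec_mulVec, mul_assoc]
  have hq4 : (T *ᵥ w) ⬝ᵥ (y *ᵥ (T *ᵥ w)) = ∑ i, (((Uᵀ * S) *ᵥ v) i) ^ 2 := by
    rw [hTw, quad_congr, invSqrt_transpose hy, invSqrt_mul_self_mul hy, one_mulVec,
      ← dot_self_of_orth (orth_comm hUt) (S *ᵥ v), dot_self_eq_sum_sq]
    simp only [hS, mulVec_mulVec, mul_assoc]
  refine ⟨w, hwne, hTwne, ?_, ?_, ?_, ?_⟩
  · intro α hα
    rw [hq1, hq2]
    exact sum_bound_lower hsup' hα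
  · intro α hα
    rw [hq1, hq2]
    exact sum_bound_upper hsup' hα
  · intro α hα
    rw [hq3, hq4]
    exact sum_bound_lower hsup hα
  · intro α hα
    rw [hq3, hq4]
    exact sum_bound_upper hsup hα

section EigCompare

lemma card_tool_le (k : Fin r) : r < (Finset.Ici k).card + (Finset.Iic k).card := by
  rw [Fin.card_Ici, Fin.card_Iic]
  have := k.isLt; omega

lemma card_tool_rev (k : Fin r) : r < (Finset.Iic k.rev).card + (Finset.Iic k).card := by
  rw [Fin.card_Iic, Fin.card_Iic, Fin.val_rev]
  have := k.isLt; omega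

lemma card_tool_rev' (k : Fin r) : r < (Finset.Ici k.rev).card + (Finset.Ici k).card := by
  rw [Fin.card_Ici, Fin.card_Ici, Fin.val_rev]
  have := k.isLt; omega

lemma eig_le_mono {x y x' y' T U U' : Mat} {d d' : Fin r → ℝ} (hx : x.PosDef) (hy : y.PosDef) (hx' : x'.PosDef) (hy' : y'.PosDef)
    (hT : IsUnit T)
    (hUt : Uᵀ * U = 1) (hdec : y.invSqrt * x * y.invSqrt = U * diagonal d * Uᵀ)
    (hU't : U'ᵀ * U' = 1) (hdec' : y'.invSqrt * x' * y'.invSqrt = U' * diagonal d' * U'ᵀ)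
    (hd : Antitone d) (hd' : Antitone d')
    (φ : ℝ → ℝ) (hφ : ∀ s t : ℝ, 0 < s → s ≤ t → φ s ≤ φ t)
    (H : ∀ w : Fin r → ℝ, w ≠ 0 → (w ⬝ᵥ (x' *ᵥ w)) / (w ⬝ᵥ (y' *ᵥ w)) ≤
      φ (((T *ᵥ w) ⬝ᵥ (x *ᵥ (T *ᵥ w))) / ((T *ᵥ w) ⬝ᵥ (y *ᵥ (T *ᵥ w)))))
    (k : Fin r) : d' k ≤ φ (d k) := by
  obtain ⟨w, hw, hTw, hlow', hup', hlow, hup⟩ :=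
    core_exists hy hy' hT hUt hdec hU't hdec' (Finset.Ici k) (Finset.Iic k) (card_tool_le k)
  have hq' : 0 < w ⬝ᵥ (y' *ᵥ w) := posdef_quad_pos hy' hw
  have hq : 0 < (T *ᵥ w) ⬝ᵥ (y *ᵥ (T *ᵥ w)) := posdef_quad_pos hy hTw
  have hp : 0 < (T *ᵥ w) ⬝ᵥ (x *ᵥ (T *ᵥ w)) := posdef_quad_pos hx hTw
  have h1 : d' k ≤ (w ⬝ᵥ (x' *ᵥ w)) / (w ⬝ᵥ (y' *ᵥ w)) :=
    (le_div_iff₀ hq').mpr (hlow' (d' k) (fun i hi => hd' (Finset.mem_Iic.mp hi)))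
  have h2 : ((T *ᵥ w) ⬝ᵥ (x *ᵥ (T *ᵥ w))) / ((T *ᵥ w) ⬝ᵥ (y *ᵥ (T *ᵥ w))) ≤ d k :=
    (div_le_iff₀ hq).mpr (hup (d k) (fun i hi => hd (Finset.mem_Ici.mp hi)))
  exact h1.trans ((H w hw).trans (hφ _ _ (div_pos hp hq) h2))

lemma eig_ge_mono {x y x' y' T U U' : Mat} {d d' : Fin r → ℝ} (hx : x.PosDef) (hy : y.PosDef) (hx' : x'.PosDef) (hy' : y'.PosDef)
    (hT : IsUnit T)
    (hUt : Uᵀ * U = 1) (hdec : y.invSqrt * x * y.invSqrt = U * diagonal d * Uᵀ)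
    (hU't : U'ᵀ * U' = 1) (hdec' : y'.invSqrt * x' * y'.invSqrt = U' * diagonal d' * U'ᵀ)
    (hd : Antitone d) (hd' : Antitone d') (hdpos : ∀ i, 0 < d i)
    (φ : ℝ → ℝ) (hφ : ∀ s t : ℝ, 0 < s → s ≤ t → φ s ≤ φ t)
    (H : ∀ w : Fin r → ℝ, w ≠ 0 →
      φ (((T *ᵥ w) ⬝ᵥ (x *ᵥ (T *ᵥ w))) / ((T *ᵥ w) ⬝ᵥ (y *ᵥ (T *ᵥ w)))) ≤
      (w ⬝ᵥ (x' *ᵥ w)) / (w ⬝ᵥ (y' *ᵥ w)))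
    (k : Fin r) : φ (d k) ≤ d' k := by
  obtain ⟨w, hw, hTw, hlow', hup', hlow, hup⟩ :=
    core_exists hy hy' hT hUt hdec hU't hdec' (Finset.Iic k) (Finset.Ici k) (by
      rw [add_comm]; exact card_tool_le k)
  have hq' : 0 < w ⬝ᵥ (y' *ᵥ w) := posdef_quad_pos hy' hw
  have hq : 0 < (T *ᵥ w) ⬝ᵥ (y *ᵥ (T *ᵥ w)) := posdef_quad_pos hy hTw
  have h1 : (w ⬝ᵥ (x' *ᵥ w)) / (w ⬝ᵥ (y' *ᵥ w)) ≤ d' k :=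
    (div_le_iff₀ hq').mpr (hup' (d' k) (fun i hi => hd' (Finset.mem_Ici.mp hi)))
  have h2 : d k ≤ ((T *ᵥ w) ⬝ᵥ (x *ᵥ (T *ᵥ w))) / ((T *ᵥ w) ⬝ᵥ (y *ᵥ (T *ᵥ w))) :=
    (le_div_iff₀ hq).mpr (hlow (d k) (fun i hi => hd (Finset.mem_Iic.mp hi)))
  exact (hφ _ _ (hdpos k) h2).trans ((H w hw).trans h1)

lemma eig_le_anti {x y x' y' T U U' : Mat} {d d' : Fin r → ℝ} (hx : x.PosDef) (hy : y.PosDef) (hx' : x'.PosDef) (hy' : y'.PosDef)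
    (hT : IsUnit T)
    (hUt : Uᵀ * U = 1) (hdec : y.invSqrt * x * y.invSqrt = U * diagonal d * Uᵀ)
    (hU't : U'ᵀ * U' = 1) (hdec' : y'.invSqrt * x' * y'.invSqrt = U' * diagonal d' * U'ᵀ)
    (hd : Antitone d) (hd' : Antitone d') (hdpos : ∀ i, 0 < d i)
    (φ : ℝ → ℝ) (hφ : ∀ s t : ℝ, 0 < s → s ≤ t → φ t ≤ φ s)
    (H : ∀ w : Fin r → ℝ, w ≠ 0 → (w ⬝ᵥ (x' *ᵥ w)) / (w ⬝ᵥ (y' *ᵥ w)) ≤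
      φ (((T *ᵥ w) ⬝ᵥ (x *ᵥ (T *ᵥ w))) / ((T *ᵥ w) ⬝ᵥ (y *ᵥ (T *ᵥ w)))))
    (k : Fin r) : d' k ≤ φ (d k.rev) := by
  obtain ⟨w, hw, hTw, hlow', hup', hlow, hup⟩ :=
    core_exists hy hy' hT hUt hdec hU't hdec' (Finset.Iic k.rev) (Finset.Iic k)
      (card_tool_rev k)
  have hq' : 0 < w ⬝ᵥ (y' *ᵥ w) := posdef_quad_pos hy' hw
  have hq : 0 < (T *ᵥ w) ⬝ᵥ (y *ᵥ (T *ᵥ w)) := posdef_quad_pos hy hTw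
  have h1 : d' k ≤ (w ⬝ᵥ (x' *ᵥ w)) / (w ⬝ᵥ (y' *ᵥ w)) :=
    (le_div_iff₀ hq').mpr (hlow' (d' k) (fun i hi => hd' (Finset.mem_Iic.mp hi)))
  have h2 : d k.rev ≤ ((T *ᵥ w) ⬝ᵥ (x *ᵥ (T *ᵥ w))) / ((T *ᵥ w) ⬝ᵥ (y *ᵥ (T *ᵥ w))) :=
    (le_div_iff₀ hq).mpr (hlow (d k.rev) (fun i hi => hd (Finset.mem_Iic.mp hi)))
  exact h1.trans ((H w hw).trans (hφ _ _ (hdpos k.rev) h2))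

lemma eig_ge_anti {x y x' y' T U U' : Mat} {d d' : Fin r → ℝ} (hx : x.PosDef) (hy : y.PosDef) (hx' : x'.PosDef) (hy' : y'.PosDef)
    (hT : IsUnit T)
    (hUt : Uᵀ * U = 1) (hdec : y.invSqrt * x * y.invSqrt = U * diagonal d * Uᵀ)
    (hU't : U'ᵀ * U' = 1) (hdec' : y'.invSqrt * x' * y'.invSqrt = U' * diagonal d' * U'ᵀ)
    (hd : Antitone d) (hd' : Antitone d')
    (φ : ℝ → ℝ) (hφ : ∀ s t : ℝ, 0 < s → s ≤ t → φ t ≤ φ s)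
    (H : ∀ w : Fin r → ℝ, w ≠ 0 →
      φ (((T *ᵥ w) ⬝ᵥ (x *ᵥ (T *ᵥ w))) / ((T *ᵥ w) ⬝ᵥ (y *ᵥ (T *ᵥ w)))) ≤
      (w ⬝ᵥ (x' *ᵥ w)) / (w ⬝ᵥ (y' *ᵥ w)))
    (k : Fin r) : φ (d k.rev) ≤ d' k := by
  obtain ⟨w, hw, hTw, hlow', hup', hlow, hup⟩ :=
    core_exists hy hy' hT hUt hdec hU't hdec' (Finset.Ici k.rev) (Finset.Ici k)
      (card_tool_rev' k)
  have hq' : 0 < w ⬝ᵥ (y' *ᵥ w) := posdef_quad_pos hy' hw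
  have hq : 0 < (T *ᵥ w) ⬝ᵥ (y *ᵥ (T *ᵥ w)) := posdef_quad_pos hy hTw
  have hp : 0 < (T *ᵥ w) ⬝ᵥ (x *ᵥ (T *ᵥ w)) := posdef_quad_pos hx hTw
  have h1 : (w ⬝ᵥ (x' *ᵥ w)) / (w ⬝ᵥ (y' *ᵥ w)) ≤ d' k :=
    (div_le_iff₀ hq').mpr (hup' (d' k) (fun i hi => hd' (Finset.mem_Ici.mp hi)))
  have h2 : ((T *ᵥ w) ⬝ᵥ (x *ᵥ (T *ᵥ w))) / ((T *ᵥ w) ⬝ᵥ (y *ᵥ (T *ᵥ w))) ≤ d k.rev :=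
    (div_le_iff₀ hq).mpr (hup (d k.rev) (fun i hi => hd (Finset.mem_Ici.mp hi)))
  exact (hφ _ _ (div_pos hp hq) h2).trans ((H w hw).trans h1)

end EigCompare

lemma isUnit_transpose {a : Mat} (ha : IsUnit a) : IsUnit aᵀ := by
  rw [isUnit_iff_isUnit_det, det_transpose]
  exact (isUnit_iff_isUnit_det a).mp ha

/-- Uniqueness of the sorted eigenvalues: any orthogonal decomposition of `C(x,y)` with
antitone diagonal entries must be `lambdaK`. -/
lemma lambdaK_eq_of_decomp {x y W : Mat} {e : Fin r → ℝ} (hx : x.PosDef) (hy : y.PosDef)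
    (hWt : Wᵀ * W = 1) (hdecW : y.invSqrt * x * y.invSqrt = W * diagonal e * Wᵀ)
    (he : Antitone e) : x.lambdaK y = e := by
  obtain ⟨U, hUt, hUUt, hdec⟩ := bridge hx hy
  funext k
  have hid : ∀ s t : ℝ, 0 < s → s ≤ t → id s ≤ id t := fun s t _ h => h
  apply le_antisymm
  · exact eig_ge_mono hx hy hx hy isUnit_one hUt hdec hWt hdecW
      (lambdaK_antitone hx hy) he (lambdaK_pos hx hy) id hid
      (fun w hw => by simp [one_mulVec]) k
  · exact eig_le_mono hx hy hx hy isUnit_one hUt hdec hWt hdecW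
      (lambdaK_antitone hx hy) he id hid
      (fun w hw => by simp [one_mulVec]) k

lemma posdef_congr {x a : Mat} (hx : x.PosDef) (ha : IsUnit a) :
    (a * x * aᵀ).PosDef := by
  have h := posdef_conj hx (isUnit_transpose ha)
  rwa [transpose_transpose] at h

/-- congruence invariance of the sorted relative eigenvalues -/
lemma lambdaK_congr {x y a : Mat} (hx : x.PosDef) (hy : y.PosDef) (ha : IsUnit a) :
    (a * x * aᵀ).lambdaK (a * y * aᵀ) = x.lambdaK y := by
  have hx' : (a * x * aᵀ).PosDef := posdef_congr hx ha
  have hy' : (a * y * aᵀ).PosDef := posdef_congr hy ha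
  obtain ⟨U, hUt, hUUt, hdec⟩ := bridge hx hy
  obtain ⟨U', hU't, hU'Ut, hdec'⟩ := bridge hx' hy'
  have hid : ∀ s t : ℝ, 0 < s → s ≤ t → id s ≤ id t := fun s t _ h => h
  have hq : ∀ (z : Mat) (w : Fin r → ℝ),
      w ⬝ᵥ ((a * z * aᵀ) *ᵥ w) = (aᵀ *ᵥ w) ⬝ᵥ (z *ᵥ (aᵀ *ᵥ w)) := by
    intro z w
    rw [quad_congr, transpose_transpose]
  funext k
  apply le_antisymm
  · exact eig_le_mono hx hy hx' hy' (isUnit_transpose ha) hUt hdec hU't hdec'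
      (lambdaK_antitone hx hy) (lambdaK_antitone hx' hy') id hid
      (fun w hw => by rw [hq x w, hq y w]; exact le_refl _) k
  · exact eig_ge_mono hx hy hx' hy' (isUnit_transpose ha) hUt hdec hU't hdec'
      (lambdaK_antitone hx hy) (lambdaK_antitone hx' hy') (lambdaK_pos hx hy) id hid
      (fun w hw => by rw [hq x w, hq y w]; exact le_refl _) k

/-- inversion reverses and inverts the sorted relative eigenvalues -/
lemma lambdaK_inv {x y : Mat} (hx : x.PosDef) (hy : y.PosDef) (k : Fin r) :
    x⁻¹.lambdaK y⁻¹ k = (x.lambdaK y k.rev)⁻¹ := by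
  obtain ⟨U, hUt, hUUt, hdec⟩ := bridge hx hy
  set d := x.lambdaK y with hd
  have hinvSq : (y.invSqrt)⁻¹ = sq hy := by
    rw [invSqrt_eq hy,
      nonsing_inv_nonsing_inv _ ((isUnit_iff_isUnit_det _).mp (isUnit_sq hy))]
  have hUinv : U⁻¹ = Uᵀ := inv_eq_left_inv hUt
  have hUtinv : (Uᵀ)⁻¹ = U := inv_eq_left_inv hUUt
  have hCinv : (y⁻¹).invSqrt * x⁻¹ * (y⁻¹).invSqrt
      = U * diagonal (fun i => (d i)⁻¹) * Uᵀ := by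
    have h1 : (y.invSqrt * x * y.invSqrt)⁻¹ = sq hy * x⁻¹ * sq hy := by
      rw [Matrix.mul_inv_rev, Matrix.mul_inv_rev, hinvSq, mul_assoc]
    have hdiag : (diagonal d)⁻¹ = diagonal (fun i => (d i)⁻¹) :=
      inv_eq_left_inv (by
        rw [diagonal_mul_diagonal,
          show (fun i => (d i)⁻¹ * d i) = fun _ : Fin r => (1 : ℝ) from
            funext fun i => inv_mul_cancel₀ (lambdaK_pos hx hy i).ne', diagonal_one])
    have h2 : (U * diagonal d * Uᵀ)⁻¹ = U * diagonal (fun i => (d i)⁻¹) * Uᵀ := by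
      rw [Matrix.mul_inv_rev, Matrix.mul_inv_rev, hUinv, hUtinv, hdiag, mul_assoc]
    rw [invSqrt_inv hy, ← h1, hdec, h2]
  have hperm := decomp_perm U (fun i => (d i)⁻¹) Fin.revPerm
  have he : ((fun i => (d i)⁻¹) ∘ ⇑(Fin.revPerm (n := r))) = fun i => (d i.rev)⁻¹ := by
    funext i; simp
  rw [he] at hperm
  have hanti : Antitone (fun i : Fin r => (d i.rev)⁻¹) := by
    intro k l hkl
    have h1 : d k.rev ≤ d l.rev :=
      lambdaK_antitone hx hy (Fin.rev_le_rev.mpr hkl)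
    exact inv_anti₀ (lambdaK_pos hx hy k.rev) h1
  have := lambdaK_eq_of_decomp hx.inv hy.inv (orth_perm hUt Fin.revPerm)
    (by rw [hCinv, ← hperm]) hanti
  rw [this]

lemma riemannDist_nonneg (x y : Mat) : 0 ≤ x.riemannDist y := Real.sqrt_nonneg _

lemma riemannDist_congr {x y a : Mat} (hx : x.PosDef) (hy : y.PosDef) (ha : IsUnit a) :
    (a * x * aᵀ).riemannDist (a * y * aᵀ) = x.riemannDist y := by
  rw [Matrix.riemannDist, Matrix.riemannDist, lambdaK_congr hx hy ha]

lemma riemannDist_inv {x y : Mat} (hx : x.PosDef) (hy : y.PosDef) :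
    x⁻¹.riemannDist y⁻¹ = x.riemannDist y := by
  rw [Matrix.riemannDist, Matrix.riemannDist]
  congr 1
  calc ∑ k, (Real.log (x⁻¹.lambdaK y⁻¹ k)) ^ 2
      = ∑ k, (Real.log (x.lambdaK y (Fin.revPerm k))) ^ 2 := by
        refine Finset.sum_congr rfl fun k _ => ?_
        rw [lambdaK_inv hx hy, Real.log_inv, Fin.revPerm_apply]
        ring
    _ = ∑ k, (Real.log (x.lambdaK y k)) ^ 2 :=
        Equiv.sum_comp Fin.revPerm (fun k => (Real.log (x.lambdaK y k)) ^ 2)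

lemma riemannDist_pos {x y : Mat} (hx : x.PosDef) (hy : y.PosDef) (hne : x ≠ y) :
    0 < x.riemannDist y := by
  have hL : ∃ k, x.lambdaK y k ≠ 1 := by
    by_contra h
    push_neg at h
    obtain ⟨U, hUt, hUUt, hdec⟩ := bridge hx hy
    have hC1 : y.invSqrt * x * y.invSqrt = 1 := by
      rw [hdec, show x.lambdaK y = fun _ : Fin r => (1 : ℝ) from funext h,
        diagonal_one, mul_one, hUUt]
    apply hne
    have hxr := sq_conj_C (x := x) hy
    rw [hC1, mul_one, sq_mul_sq hy] at hxr
    exact hxr.symm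
  obtain ⟨k, hk⟩ := hL
  apply Real.sqrt_pos.mpr
  apply Finset.sum_pos' (fun i _ => sq_nonneg _)
  refine ⟨k, Finset.mem_univ k, ?_⟩
  have hlog : Real.log (x.lambdaK y k) ≠ 0 := by
    intro h0
    rcases Real.log_eq_zero.mp h0 with h | h | h
    · exact (lambdaK_pos hx hy k).ne' h
    · exact hk h
    · linarith [lambdaK_pos hx hy k]
  exact lt_of_le_of_ne (sq_nonneg _) (Ne.symm (pow_ne_zero 2 hlog))

/-- scalar inequality, simple version -/
lemma scal_one {p q s : ℝ} (hp : 0 < p) (hq : 0 < q) (hs : 0 ≤ s) :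
    min (p / q) 1 ≤ (p + s) / (q + s) ∧ (p + s) / (q + s) ≤ max (p / q) 1 := by
  rcases le_total p q with h | h
  · constructor
    · refine le_trans (min_le_left _ _) ?_
      rw [div_le_div_iff₀ hq (by linarith)]
      nlinarith
    · refine le_trans ?_ (le_max_right _ _)
      rw [div_le_one (by linarith)]
      linarith
  · constructor
    · refine le_trans (min_le_right _ _) ?_
      rw [le_div_iff₀ (by linarith)]
      linarith
    · refine le_trans ?_ (le_max_left _ _)
      rw [div_le_div_iff₀ (by linarith) hq]
      nlinarith

/-- the key scalar inequality via weighted AM-GM: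
`(p+s)/(q+s) ≤ (p/q)^(p/(p+s))` when `q ≤ p`. -/
lemma scal_amgm {p q s : ℝ} (hp : 0 < p) (hq : 0 < q) (hs : 0 < s) (hqp : q ≤ p) :
    (p + s) / (q + s) ≤ (p / q) ^ (p / (p + s)) := by
  set c : ℝ := p / (p + s) with hc
  have hc0 : 0 ≤ c := by positivity
  have hc1 : c ≤ 1 := by
    rw [hc, div_le_one (by linarith)]; linarith
  have hsum : c + (1 - c) = 1 := by ring
  have h1 := Real.geom_mean_le_arith_mean2_weighted hc0
    (by linarith : (0:ℝ) ≤ 1 - c) (by positivity : (0:ℝ) ≤ q / p) zero_le_one hsum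
  rw [Real.one_rpow, mul_one] at h1
  have h2 : c * (q / p) + (1 - c) * 1 = (q + s) / (p + s) := by
    rw [hc]
    field_simp
    ring
  rw [h2] at h1
  have h4 : ((q / p) ^ c)⁻¹ = (p / q) ^ c := by
    rw [← Real.inv_rpow (by positivity), inv_div]
  calc (p + s) / (q + s) = ((q + s) / (p + s))⁻¹ := by rw [inv_div]
    _ ≤ ((q / p) ^ c)⁻¹ := inv_anti₀ (by positivity) h1
    _ = (p / q) ^ c := h4

/-- scalar inequality, quantitative version -/
lemma scal_kappa {p q s W m ε : ℝ} (hp : 0 < p) (hq : 0 < q) (hW : 0 < W)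
    (hm : 0 < m) (hε : 0 < ε) (hpm : p ≤ m * W) (hqm : q ≤ m * W) (hsε : ε * W ≤ s) :
    min ((p / q) ^ (m / (m + ε))) 1 ≤ (p + s) / (q + s) ∧
      (p + s) / (q + s) ≤ max ((p / q) ^ (m / (m + ε))) 1 := by
  set κ : ℝ := m / (m + ε) with hκ
  have hs : 0 < s := lt_of_lt_of_le (by positivity) hsε
  have hcκ : ∀ a b : ℝ, 0 < a → 0 < b → a ≤ m * W → a / (a + s) ≤ κ := by
    intro a b ha hb ham
    rw [hκ, div_le_div_iff₀ (by linarith) (by linarith)]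
    nlinarith
  rcases le_total q p with h | h
  · constructor
    · refine le_trans (min_le_right _ _) ?_
      rw [le_div_iff₀ (by linarith)]
      linarith
    · refine le_trans ?_ (le_max_left _ _)
      calc (p + s) / (q + s) ≤ (p / q) ^ (p / (p + s)) := scal_amgm hp hq hs h
        _ ≤ (p / q) ^ κ := Real.rpow_le_rpow_of_exponent_le
            ((one_le_div hq).mpr h) (hcκ p q hp hq hpm)
  · constructor
    · refine le_trans (min_le_left _ _) ?_
      have h1 : (q + s) / (p + s) ≤ (q / p) ^ (q / (q + s)) := scal_amgm hq hp hs h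
      have h2 : (q / p) ^ (q / (q + s)) ≤ (q / p) ^ κ :=
        Real.rpow_le_rpow_of_exponent_le ((one_le_div hp).mpr h) (hcκ q p hq hp hqm)
      have h3 : (q + s) / (p + s) ≤ (q / p) ^ κ := h1.trans h2
      have h4 : ((q / p) ^ κ)⁻¹ ≤ ((q + s) / (p + s))⁻¹ :=
        inv_anti₀ (by positivity) h3
      rw [← Real.inv_rpow (by positivity), inv_div, inv_div] at h4
      exact h4
    · refine le_trans ?_ (le_max_right _ _)
      rw [div_le_one (by linarith)]
      linarith

/-- squared-log comparison -/
lemma logsq_le_kappa {t s κ : ℝ} (ht : 0 < t) (hκ0 : 0 ≤ κ)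
    (h1 : min (t ^ κ) 1 ≤ s) (h2 : s ≤ max (t ^ κ) 1) :
    (Real.log s) ^ 2 ≤ (κ * Real.log t) ^ 2 := by
  have htκ : 0 < t ^ κ := Real.rpow_pos_of_pos ht κ
  have hspos : 0 < s := lt_of_lt_of_le (lt_min htκ one_pos) h1
  rcases le_total 1 t with h | h
  · have hge : (1:ℝ) ≤ t ^ κ := Real.one_le_rpow h hκ0
    have hmin : min (t ^ κ) 1 = 1 := min_eq_right hge
    have hmax : max (t ^ κ) 1 = t ^ κ := max_eq_left hge
    rw [hmin] at h1
    rw [hmax] at h2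
    have hls : 0 ≤ Real.log s := Real.log_nonneg h1
    have hup : Real.log s ≤ κ * Real.log t := by
      calc Real.log s ≤ Real.log (t ^ κ) := Real.log_le_log hspos h2
        _ = κ * Real.log t := Real.log_rpow ht κ
    have hlt0 : 0 ≤ κ * Real.log t := le_trans hls hup
    exact sq_le_sq' (by linarith) hup
  · have hle : t ^ κ ≤ 1 := Real.rpow_le_one ht.le h hκ0
    have hmin : min (t ^ κ) 1 = t ^ κ := min_eq_left hle
    have hmax : max (t ^ κ) 1 = 1 := max_eq_right hle
    rw [hmin] at h1
    rw [hmax] at h2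
    have hls : Real.log s ≤ 0 := Real.log_nonpos hspos.le h2
    have hlo : κ * Real.log t ≤ Real.log s := by
      calc κ * Real.log t = Real.log (t ^ κ) := (Real.log_rpow ht κ).symm
        _ ≤ Real.log s := Real.log_le_log htκ h1
    have hlt0 : κ * Real.log t ≤ 0 := le_trans hlo hls
    have := sq_le_sq' (a := Real.log s) (b := -(κ * Real.log t))
      (by rw [neg_neg]; exact hlo) (by linarith)
    rwa [neg_sq] at this

lemma lambdaK_translate {x y u : Mat} (hx : x.PosDef) (hy : y.PosDef)
    (hu : u.PosSemidef) (k : Fin r) :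
    min (x.lambdaK y k) 1 ≤ (x + u).lambdaK (y + u) k ∧
      (x + u).lambdaK (y + u) k ≤ max (x.lambdaK y k) 1 := by
  have hx' : (x + u).PosDef := hx.add_posSemidef hu
  have hy' : (y + u).PosDef := hy.add_posSemidef hu
  obtain ⟨U, hUt, hUUt, hdec⟩ := bridge hx hy
  obtain ⟨U', hU't, hU'Ut, hdec'⟩ := bridge hx' hy'
  constructor
  · refine eig_ge_mono hx hy hx' hy' isUnit_one hUt hdec hU't hdec'
      (lambdaK_antitone hx hy) (lambdaK_antitone hx' hy') (lambdaK_pos hx hy)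
      (fun t => min t 1) (fun s t _ h => min_le_min h (le_refl 1)) ?_ k
    intro w hw
    simp only [one_mulVec, add_mulVec, dotProduct_add]
    exact (scal_one (posdef_quad_pos hx hw) (posdef_quad_pos hy hw)
      (possemidef_quad_nonneg hu w)).1
  · refine eig_le_mono hx hy hx' hy' isUnit_one hUt hdec hU't hdec'
      (lambdaK_antitone hx hy) (lambdaK_antitone hx' hy')
      (fun t => max t 1) (fun s t _ h => max_le_max h (le_refl 1)) ?_ k
    intro w hw
    simp only [one_mulVec, add_mulVec, dotProduct_add]
    exact (scal_one (posdef_quad_pos hx hw) (posdef_quad_pos hy hw)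
      (possemidef_quad_nonneg hu w)).2

lemma lambdaK_translate_kappa {x y u : Mat} (hx : x.PosDef) (hy : y.PosDef)
    (hu : u.PosSemidef) {m ε : ℝ} (hm : 0 < m) (hε : 0 < ε)
    (hbx : ∀ w : Fin r → ℝ, w ⬝ᵥ (x *ᵥ w) ≤ m * (w ⬝ᵥ w))
    (hby : ∀ w : Fin r → ℝ, w ⬝ᵥ (y *ᵥ w) ≤ m * (w ⬝ᵥ w))
    (hbu : ∀ w : Fin r → ℝ, ε * (w ⬝ᵥ w) ≤ w ⬝ᵥ (u *ᵥ w)) (k : Fin r) :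
    min ((x.lambdaK y k) ^ (m / (m + ε))) 1 ≤ (x + u).lambdaK (y + u) k ∧
      (x + u).lambdaK (y + u) k ≤ max ((x.lambdaK y k) ^ (m / (m + ε))) 1 := by
  have hx' : (x + u).PosDef := hx.add_posSemidef hu
  have hy' : (y + u).PosDef := hy.add_posSemidef hu
  obtain ⟨U, hUt, hUUt, hdec⟩ := bridge hx hy
  obtain ⟨U', hU't, hU'Ut, hdec'⟩ := bridge hx' hy'
  have hκ0 : 0 ≤ m / (m + ε) := by positivity
  constructor
  · refine eig_ge_mono hx hy hx' hy' isUnit_one hUt hdec hU't hdec'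
      (lambdaK_antitone hx hy) (lambdaK_antitone hx' hy') (lambdaK_pos hx hy)
      (fun t => min (t ^ (m / (m + ε))) 1)
      (fun s t hs h => min_le_min (Real.rpow_le_rpow hs.le h hκ0) (le_refl 1)) ?_ k
    intro w hw
    simp only [one_mulVec, add_mulVec, dotProduct_add]
    exact (scal_kappa (posdef_quad_pos hx hw) (posdef_quad_pos hy hw)
      (dot_self_pos hw) hm hε (hbx w) (hby w) (hbu w)).1
  · refine eig_le_mono hx hy hx' hy' isUnit_one hUt hdec hU't hdec'
      (lambdaK_antitone hx hy) (lambdaK_antitone hx' hy')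
      (fun t => max (t ^ (m / (m + ε))) 1)
      (fun s t hs h => max_le_max (Real.rpow_le_rpow hs.le h hκ0) (le_refl 1)) ?_ k
    intro w hw
    simp only [one_mulVec, add_mulVec, dotProduct_add]
    exact (scal_kappa (posdef_quad_pos hx hw) (posdef_quad_pos hy hw)
      (dot_self_pos hw) hm hε (hbx w) (hby w) (hbu w)).2

lemma riemannDist_translate {x y u : Mat} (hx : x.PosDef) (hy : y.PosDef)
    (hu : u.PosSemidef) :
    (x + u).riemannDist (y + u) ≤ x.riemannDist y := by
  rw [Matrix.riemannDist, Matrix.riemannDist]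
  apply Real.sqrt_le_sqrt
  apply Finset.sum_le_sum
  intro k _
  obtain ⟨h1, h2⟩ := lambdaK_translate hx hy hu k
  have ht := lambdaK_pos hx hy k
  rw [← Real.rpow_one (x.lambdaK y k)] at h1 h2
  have := logsq_le_kappa ht zero_le_one h1 h2
  rwa [one_mul] at this

lemma riemannDist_translate_kappa {x y u : Mat} (hx : x.PosDef) (hy : y.PosDef)
    (hu : u.PosSemidef) {m ε : ℝ} (hm : 0 < m) (hε : 0 < ε)
    (hbx : ∀ w : Fin r → ℝ, w ⬝ᵥ (x *ᵥ w) ≤ m * (w ⬝ᵥ w))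
    (hby : ∀ w : Fin r → ℝ, w ⬝ᵥ (y *ᵥ w) ≤ m * (w ⬝ᵥ w))
    (hbu : ∀ w : Fin r → ℝ, ε * (w ⬝ᵥ w) ≤ w ⬝ᵥ (u *ᵥ w)) :
    (x + u).riemannDist (y + u) ≤ (m / (m + ε)) * x.riemannDist y := by
  set κ : ℝ := m / (m + ε) with hκdef
  have hκ0 : 0 ≤ κ := by positivity
  rw [Matrix.riemannDist, Matrix.riemannDist]
  have hstep : ∑ k, (Real.log ((x + u).lambdaK (y + u) k)) ^ 2 ≤
      κ ^ 2 * ∑ k, (Real.log (x.lambdaK y k)) ^ 2 := by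
    rw [Finset.mul_sum]
    apply Finset.sum_le_sum
    intro k _
    obtain ⟨h1, h2⟩ := lambdaK_translate_kappa hx hy hu hm hε hbx hby hbu k
    have := logsq_le_kappa (lambdaK_pos hx hy k) hκ0 h1 h2
    calc (Real.log ((x + u).lambdaK (y + u) k)) ^ 2
        ≤ (κ * Real.log (x.lambdaK y k)) ^ 2 := this
      _ = κ ^ 2 * (Real.log (x.lambdaK y k)) ^ 2 := by ring
  calc Real.sqrt (∑ k, (Real.log ((x + u).lambdaK (y + u) k)) ^ 2)
      ≤ Real.sqrt (κ ^ 2 * ∑ k, (Real.log (x.lambdaK y k)) ^ 2) :=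
        Real.sqrt_le_sqrt hstep
    _ = κ * Real.sqrt (∑ k, (Real.log (x.lambdaK y k)) ^ 2) := by
        rw [Real.sqrt_mul (sq_nonneg κ), Real.sqrt_sq hκ0]

/-- Loewner monotonicity of the inverse, at the level of quadratic forms. -/
lemma inv_quad_le {A B : Mat} (hA : A.PosDef) (hB : B.PosDef)
    (hBA : (B - A).PosSemidef) (w : Fin r → ℝ) :
    w ⬝ᵥ (B⁻¹ *ᵥ w) ≤ w ⬝ᵥ (A⁻¹ *ᵥ w) := by
  have hdA : IsUnit A.det := (isUnit_iff_isUnit_det _).mp hA.isUnit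
  have hdB : IsUnit B.det := (isUnit_iff_isUnit_det _).mp hB.isUnit
  set t : Fin r → ℝ := B⁻¹ *ᵥ w with hts
  set z : Fin r → ℝ := A⁻¹ *ᵥ w with hzs
  have hAz : A *ᵥ z = w := by
    rw [hzs, mulVec_mulVec, mul_nonsing_inv _ hdA, one_mulVec]
  have hBt : B *ᵥ t = w := by
    rw [hts, mulVec_mulVec, mul_nonsing_inv _ hdB, one_mulVec]
  have hAt : Aᵀ = A := by
    have h := hA.isHermitian
    rwa [IsHermitian, conjTranspose_eq_transpose_of_trivial] at h
  have hzAt : z ⬝ᵥ (A *ᵥ t) = w ⬝ᵥ t := by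
    rw [dot_mulVec_left, hAt, hAz]
  have hE : 0 ≤ t ⬝ᵥ (A *ᵥ t) - w ⬝ᵥ t - (t ⬝ᵥ w - z ⬝ᵥ w) := by
    have h := possemidef_quad_nonneg hA.posSemidef (t - z)
    rw [mulVec_sub, dotProduct_sub, sub_dotProduct, sub_dotProduct, hAz, hzAt] at h
    linarith
  have hF : 0 ≤ t ⬝ᵥ w - t ⬝ᵥ (A *ᵥ t) := by
    have h := possemidef_quad_nonneg hBA t
    rw [sub_mulVec, dotProduct_sub, hBt] at h
    linarith
  have hwt : w ⬝ᵥ t = t ⬝ᵥ w := dotProduct_comm _ _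
  have hwz : w ⬝ᵥ z = z ⬝ᵥ w := dotProduct_comm _ _
  rw [hwt, hwz]
  linarith

/-- crude quadratic form upper bound -/
lemma quad_le_sum_abs (M : Mat) (w : Fin r → ℝ) :
    w ⬝ᵥ (M *ᵥ w) ≤ (∑ i, ∑ j, |M i j|) * (w ⬝ᵥ w) := by
  have hterm : ∀ i j : Fin r, w i * (M i j * w j) ≤ |M i j| * (w ⬝ᵥ w) := by
    intro i j
    have h3 : |w i| * |w j| ≤ w ⬝ᵥ w := by
      have h4 : 2 * |w i| * |w j| ≤ |w i| ^ 2 + |w j| ^ 2 := two_mul_le_add_sq _ _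
      have h6i : (w i) ^ 2 ≤ ∑ l, (w l) ^ 2 :=
        Finset.single_le_sum (fun l _ => sq_nonneg (w l)) (Finset.mem_univ i)
      have h6j : (w j) ^ 2 ≤ ∑ l, (w l) ^ 2 :=
        Finset.single_le_sum (fun l _ => sq_nonneg (w l)) (Finset.mem_univ j)
      rw [sq_abs, sq_abs] at h4
      rw [dot_self_eq_sum_sq]
      nlinarith [abs_nonneg (w i), abs_nonneg (w j)]
    calc w i * (M i j * w j) ≤ |w i * (M i j * w j)| := le_abs_self _
      _ = |M i j| * (|w i| * |w j|) := by rw [abs_mul, abs_mul]; ring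
      _ ≤ |M i j| * (w ⬝ᵥ w) := mul_le_mul_of_nonneg_left h3 (abs_nonneg _)
  calc w ⬝ᵥ (M *ᵥ w) = ∑ i, ∑ j, w i * (M i j * w j) := by
        simp only [dotProduct, Matrix.mulVec, Finset.mul_sum]
    _ ≤ ∑ i, ∑ j, |M i j| * (w ⬝ᵥ w) :=
        Finset.sum_le_sum fun i _ => Finset.sum_le_sum fun j _ => hterm i j
    _ = (∑ i, ∑ j, |M i j|) * (w ⬝ᵥ w) := by
        rw [Finset.sum_mul]
        exact Finset.sum_congr rfl fun i _ => (Finset.sum_mul _ _ _).symm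

open scoped MatrixOrder in
lemma invSqrt_one : (1 : Mat).invSqrt = 1 := by
  rw [invSqrt_eq Matrix.PosDef.one, sq_eq_cfc, CFC.sqrt_one, inv_one]

/-- positive lower bound for the quadratic form of a PosDef matrix -/
lemma posdef_lower_bound (hr : 0 < r) {u : Mat} (hu : u.PosDef) :
    ∃ ε : ℝ, 0 < ε ∧ ∀ w : Fin r → ℝ, ε * (w ⬝ᵥ w) ≤ w ⬝ᵥ (u *ᵥ w) := by
  have hone : (1 : Mat).PosDef := Matrix.PosDef.one
  obtain ⟨U, hUt, hUUt, hdec⟩ := bridge hu hone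
  rw [invSqrt_one, one_mul, mul_one] at hdec
  have hne : (Finset.univ : Finset (Fin r)).Nonempty := ⟨⟨0, hr⟩, Finset.mem_univ _⟩
  refine ⟨Finset.univ.inf' hne (u.lambdaK 1), ?_, ?_⟩
  · rw [Finset.lt_inf'_iff]
    intro i _
    exact lambdaK_pos hu hone i
  · intro w
    have hq := quad_decomp hdec w
    have hsum : ∑ i, ((Uᵀ *ᵥ w) i) ^ 2 = w ⬝ᵥ w := by
      rw [← dot_self_eq_sum_sq, dot_self_of_orth hUUt]
    rw [hq, ← hsum]
    exact sum_bound_lower (fun i hi => absurd (Finset.mem_univ i) hi)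
      (fun i _ => Finset.inf'_le _ (Finset.mem_univ i))

lemma dot_self_nonneg' (w : Fin r → ℝ) : 0 ≤ w ⬝ᵥ w := by
  rw [dot_self_eq_sum_sq]
  exact Finset.sum_nonneg fun i _ => sq_nonneg _

lemma sum_abs_nonneg' (M : Mat) : 0 ≤ ∑ i, ∑ j, |M i j| :=
  Finset.sum_nonneg fun i _ => Finset.sum_nonneg fun j _ => abs_nonneg _

lemma quad_le_const (M : Mat) {m : ℝ} (hm : (∑ i, ∑ j, |M i j|) ≤ m) (w : Fin r → ℝ) :
    w ⬝ᵥ (M *ᵥ w) ≤ m * (w ⬝ᵥ w) :=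
  le_trans (quad_le_sum_abs M w) (mul_le_mul_of_nonneg_right hm (dot_self_nonneg' w))

lemma quad_conj_eq (z aT : Mat) (w : Fin r → ℝ) :
    w ⬝ᵥ ((aTᵀ * z * aT) *ᵥ w) = (aT *ᵥ w) ⬝ᵥ (z *ᵥ (aT *ᵥ w)) :=
  (quad_congr z aT w).symm

end RD


open RD

/-- Elements `f(x) = u + a (x⁻¹ + v)⁻¹ aᵀ` of the compression semigroup of the cone of
positive definite symmetric matrices contract the Riemannian distance `δ`; strictly if
`u` or `v` is positive definite, and uniformly (by a factor `κ < 1`) if both are. -/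
theorem compression_semigroup_contracts_riemannian_distance (r : ℕ) (hr : 0 < r)
    (u v a : Matrix (Fin r) (Fin r) ℝ)
    (hu : u.PosSemidef) (hv : v.PosSemidef) (ha : IsUnit a)
    (f : Matrix (Fin r) (Fin r) ℝ → Matrix (Fin r) (Fin r) ℝ)
    (hf : f = fun x => u + a * (x⁻¹ + v)⁻¹ * aᵀ) :
    (∀ x y : Matrix (Fin r) (Fin r) ℝ, x.PosDef → y.PosDef →
      (f x).riemannDist (f y) ≤ x.riemannDist y) ∧
    ((u.PosDef ∨ v.PosDef) → ∀ x y : Matrix (Fin r) (Fin r) ℝ, x.PosDef → y.PosDef →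
      x ≠ y → (f x).riemannDist (f y) < x.riemannDist y) ∧
    (u.PosDef → v.PosDef → ∃ κ : ℝ, 0 < κ ∧ κ < 1 ∧
      ∀ x y : Matrix (Fin r) (Fin r) ℝ, x.PosDef → y.PosDef →
        (f x).riemannDist (f y) ≤ κ * x.riemannDist y) := by
  -- basic positivity facts
  have hxv : ∀ x : Matrix (Fin r) (Fin r) ℝ, x.PosDef → (x⁻¹ + v).PosDef :=
    fun x hx => hx.inv.add_posSemidef hv
  have hg : ∀ x : Matrix (Fin r) (Fin r) ℝ, x.PosDef →
      (a * (x⁻¹ + v)⁻¹ * aᵀ).PosDef :=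
    fun x hx => posdef_congr (hxv x hx).inv ha
  -- the inner map is nonexpansive
  have main_g : ∀ x y : Matrix (Fin r) (Fin r) ℝ, x.PosDef → y.PosDef →
      (a * (x⁻¹ + v)⁻¹ * aᵀ).riemannDist (a * (y⁻¹ + v)⁻¹ * aᵀ) ≤ x.riemannDist y := by
    intro x y hx hy
    calc (a * (x⁻¹ + v)⁻¹ * aᵀ).riemannDist (a * (y⁻¹ + v)⁻¹ * aᵀ)
        = ((x⁻¹ + v)⁻¹).riemannDist ((y⁻¹ + v)⁻¹) :=
          riemannDist_congr (hxv x hx).inv (hxv y hy).inv ha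
      _ = (x⁻¹ + v).riemannDist (y⁻¹ + v) := riemannDist_inv (hxv x hx) (hxv y hy)
      _ ≤ x⁻¹.riemannDist y⁻¹ := riemannDist_translate hx.inv hy.inv hv
      _ = x.riemannDist y := riemannDist_inv hx hy
  have hfg : ∀ x : Matrix (Fin r) (Fin r) ℝ, f x = a * (x⁻¹ + v)⁻¹ * aᵀ + u := by
    intro x; rw [hf]; exact add_comm _ _
  refine ⟨?_, ?_, ?_⟩
  · -- part 1
    intro x y hx hy
    rw [hfg x, hfg y]
    calc (a * (x⁻¹ + v)⁻¹ * aᵀ + u).riemannDist (a * (y⁻¹ + v)⁻¹ * aᵀ + u)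
        ≤ (a * (x⁻¹ + v)⁻¹ * aᵀ).riemannDist (a * (y⁻¹ + v)⁻¹ * aᵀ) :=
          riemannDist_translate (hg x hx) (hg y hy) hu
      _ ≤ x.riemannDist y := main_g x y hx hy
  · -- part 2 : strict contraction
    rintro (hu' | hv') x y hx hy hne
    · -- u positive definite
      obtain ⟨ε, hε, hbu⟩ := posdef_lower_bound hr hu'
      set gx := a * (x⁻¹ + v)⁻¹ * aᵀ with hgx
      set gy := a * (y⁻¹ + v)⁻¹ * aᵀ with hgy
      set m : ℝ := (∑ i, ∑ j, |gx i j|) + (∑ i, ∑ j, |gy i j|) + 1 with hm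
      have hm0 : 0 < m := by
        have := sum_abs_nonneg' gx
        have := sum_abs_nonneg' gy
        rw [hm]; linarith
      have hbx : ∀ w : Fin r → ℝ, w ⬝ᵥ (gx *ᵥ w) ≤ m * (w ⬝ᵥ w) := by
        intro w
        refine quad_le_const gx ?_ w
        have := sum_abs_nonneg' gy
        rw [hm]; linarith
      have hby : ∀ w : Fin r → ℝ, w ⬝ᵥ (gy *ᵥ w) ≤ m * (w ⬝ᵥ w) := by
        intro w
        refine quad_le_const gy ?_ w
        have := sum_abs_nonneg' gx
        rw [hm]; linarith
      have hκ1 : m / (m + ε) < 1 := by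
        rw [div_lt_one (by linarith)]; linarith
      have hδ : 0 < x.riemannDist y := riemannDist_pos hx hy hne
      rw [hfg x, hfg y]
      calc (gx + u).riemannDist (gy + u)
          ≤ (m / (m + ε)) * gx.riemannDist gy :=
            riemannDist_translate_kappa (hg x hx) (hg y hy) hu hm0 hε hbx hby hbu
        _ ≤ (m / (m + ε)) * x.riemannDist y :=
            mul_le_mul_of_nonneg_left (main_g x y hx hy) (by positivity)
        _ < 1 * x.riemannDist y := mul_lt_mul_of_pos_right hκ1 hδ
        _ = x.riemannDist y := one_mul _
    · -- v positive definite
      obtain ⟨ε, hε, hbv⟩ := posdef_lower_bound hr hv'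
      set m : ℝ := (∑ i, ∑ j, |(x⁻¹) i j|) + (∑ i, ∑ j, |(y⁻¹) i j|) + 1 with hm
      have hm0 : 0 < m := by
        have := sum_abs_nonneg' (x⁻¹)
        have := sum_abs_nonneg' (y⁻¹)
        rw [hm]; linarith
      have hbx : ∀ w : Fin r → ℝ, w ⬝ᵥ (x⁻¹ *ᵥ w) ≤ m * (w ⬝ᵥ w) := by
        intro w
        refine quad_le_const (x⁻¹) ?_ w
        have := sum_abs_nonneg' (y⁻¹)
        rw [hm]; linarith
      have hby : ∀ w : Fin r → ℝ, w ⬝ᵥ (y⁻¹ *ᵥ w) ≤ m * (w ⬝ᵥ w) := by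
        intro w
        refine quad_le_const (y⁻¹) ?_ w
        have := sum_abs_nonneg' (x⁻¹)
        rw [hm]; linarith
      have hκ1 : m / (m + ε) < 1 := by
        rw [div_lt_one (by linarith)]; linarith
      have hδ : 0 < x.riemannDist y := riemannDist_pos hx hy hne
      rw [hfg x, hfg y]
      calc (a * (x⁻¹ + v)⁻¹ * aᵀ + u).riemannDist (a * (y⁻¹ + v)⁻¹ * aᵀ + u)
          ≤ (a * (x⁻¹ + v)⁻¹ * aᵀ).riemannDist (a * (y⁻¹ + v)⁻¹ * aᵀ) :=
            riemannDist_translate (hg x hx) (hg y hy) hu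
        _ = ((x⁻¹ + v)⁻¹).riemannDist ((y⁻¹ + v)⁻¹) :=
            riemannDist_congr (hxv x hx).inv (hxv y hy).inv ha
        _ = (x⁻¹ + v).riemannDist (y⁻¹ + v) := riemannDist_inv (hxv x hx) (hxv y hy)
        _ ≤ (m / (m + ε)) * x⁻¹.riemannDist y⁻¹ :=
            riemannDist_translate_kappa hx.inv hy.inv hv'.posSemidef hm0 hε hbx hby hbv
        _ = (m / (m + ε)) * x.riemannDist y := by rw [riemannDist_inv hx hy]
        _ < 1 * x.riemannDist y := mul_lt_mul_of_pos_right hκ1 hδ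
        _ = x.riemannDist y := one_mul _
  · -- part 3 : uniform contraction
    intro hu' hv'
    obtain ⟨ε, hε, hbu⟩ := posdef_lower_bound hr hu'
    set m : ℝ := (∑ i, ∑ j, |(a * v⁻¹ * aᵀ) i j|) + 1 with hm
    have hm0 : 0 < m := by
      have := sum_abs_nonneg' (a * v⁻¹ * aᵀ)
      rw [hm]; linarith
    have hbound : ∀ x : Matrix (Fin r) (Fin r) ℝ, x.PosDef →
        ∀ w : Fin r → ℝ, w ⬝ᵥ ((a * (x⁻¹ + v)⁻¹ * aᵀ) *ᵥ w) ≤ m * (w ⬝ᵥ w) := by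
      intro x hx w
      have h1 : w ⬝ᵥ ((a * (x⁻¹ + v)⁻¹ * aᵀ) *ᵥ w)
          = (aᵀ *ᵥ w) ⬝ᵥ ((x⁻¹ + v)⁻¹ *ᵥ (aᵀ *ᵥ w)) := by
        have h := quad_conj_eq ((x⁻¹ + v)⁻¹) aᵀ w
        rwa [transpose_transpose] at h
      have hsub : ((x⁻¹ + v) - v).PosSemidef := by
        rw [add_sub_cancel_right]
        exact hx.inv.posSemidef
      have h2 : (aᵀ *ᵥ w) ⬝ᵥ ((x⁻¹ + v)⁻¹ *ᵥ (aᵀ *ᵥ w))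
          ≤ (aᵀ *ᵥ w) ⬝ᵥ (v⁻¹ *ᵥ (aᵀ *ᵥ w)) :=
        inv_quad_le hv' (hxv x hx) hsub (aᵀ *ᵥ w)
      have h3 : (aᵀ *ᵥ w) ⬝ᵥ (v⁻¹ *ᵥ (aᵀ *ᵥ w)) = w ⬝ᵥ ((a * v⁻¹ * aᵀ) *ᵥ w) := by
        have h := quad_conj_eq (v⁻¹) aᵀ w
        rw [transpose_transpose] at h
        exact h.symm
      have h4 : w ⬝ᵥ ((a * v⁻¹ * aᵀ) *ᵥ w) ≤ m * (w ⬝ᵥ w) := by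
        refine quad_le_const _ ?_ w
        rw [hm]; linarith
      rw [h1]
      exact le_trans h2 (le_trans (le_of_eq h3) h4)
    refine ⟨m / (m + ε), by positivity, ?_, ?_⟩
    · rw [div_lt_one (by linarith)]; linarith
    · intro x y hx hy
      rw [hfg x, hfg y]
      calc (a * (x⁻¹ + v)⁻¹ * aᵀ + u).riemannDist (a * (y⁻¹ + v)⁻¹ * aᵀ + u)
          ≤ (m / (m + ε)) *
              (a * (x⁻¹ + v)⁻¹ * aᵀ).riemannDist (a * (y⁻¹ + v)⁻¹ * aᵀ) :=
            riemannDist_translate_kappa (hg x hx) (hg y hy) hu hm0 hε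
              (hbound x hx) (hbound y hy) hbu
        _ ≤ (m / (m + ε)) * x.riemannDist y :=
            mul_le_mul_of_nonneg_left (main_g x y hx hy) (by positivity)
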